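/- Discrete analogue of Theorem 3.1 (soundness of OLEM): in a discrete structural equation model, assume that for every topological order σ of G, every m ∈ [d], and all i, j ∈ σ[1:m] such that i is a sink of G^{σ[1:m]} while j is not, one has I(V_j ; (V_l)_{l∈Des_j^{σ[1:m]}} | (V_l)_{l∈W_j^{σ[1:m]}}) > H(ε_j) − H(ε_i). Let π be any permutation of [d] such that for every m ∈ [d], H(V_{π(m)} | (V_l)_{l∈π[1:m], l≠π(m)}) = max_{i∈π[1:m]} H(V_i | (V_l)_{l∈π[1:m], l≠i}). Then π is a topological order of G. -/

import Mathlib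

open MeasureTheory

attribute [local instance] Classical.propDecidable

/-- Shannon entropy of a finite-valued random variable. -/
noncomputable def entropy {Ω : Type*} [MeasurableSpace Ω] (P : Measure Ω)
    {T : Type*} [Fintype T] (X : Ω → T) : ℝ :=
  ∑ x : T, Real.negMulLog ((P (X ⁻¹' {x})).toReal)

/-- Conditional entropy H(Y|X) := H(X,Y) − H(X). -/
noncomputable def condEntropy {Ω : Type*} [MeasurableSpace Ω] (P : Measure Ω)
    {S T : Type*} [Fintype S] [Fintype T] (X : Ω → S) (Y : Ω → T) : ℝ :=
  entropy P (fun ω => (X ω, Y ω)) - entropy P X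

/-- Conditional mutual information I(Y;Z|X) := H(Y|X) − H(Y|X,Z). -/
noncomputable def condMutualInfo {Ω : Type*} [MeasurableSpace Ω] (P : Measure Ω)
    {S T U : Type*} [Fintype S] [Fintype T] [Fintype U]
    (X : Ω → S) (Y : Ω → T) (Z : Ω → U) : ℝ :=
  condEntropy P X Y - condEntropy P (fun ω => (X ω, Z ω)) Y

/-!
Let `S = π[1:m]`. Going down from `m = d`, it suffices to show that if `S` is closed under taking
parents then `j = π(m)` is a sink of `G^S`. If not, take a sink `i` of `G^S` and a topological
order `σ` with `σ[1:m] = S`. Every `V_l` is a function of the noises of the ancestors of `l`, so a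
family of non-descendants of a node that contains its parents is independent of the node's noise,
and conditioning on it leaves exactly the entropy of that noise. This gives
`H(V_i | V_{S∖i}) = H(ε_i)` and `I(V_j; V_{Des_j} | V_{W_j}) = H(ε_j) - H(V_j | V_{S∖j})`, so the
OLEM inequality says `H(V_j | V_{S∖j}) < H(V_i | V_{S∖i})`, against the maximality of `j`.
-/

section Entropy

variable {Ω : Type*} [MeasurableSpace Ω] (P : Measure Ω)

lemma entropy_comp_of_injective {S T : Type*} [Fintype S] [Fintype T] (X : Ω → S)
    {φ : S → T} (hφ : Function.Injective φ) :
    entropy P (fun ω => φ (X ω)) = entropy P X := by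
  have hfiber : ∀ x, (fun ω => φ (X ω)) ⁻¹' {φ x} = X ⁻¹' {x} := fun x => by
    ext ω; simp [hφ.eq_iff]
  refine (Fintype.sum_of_injective φ hφ _ _ (fun y hy => ?_) fun x => by rw [hfiber]).symm
  have hempty : (fun ω => φ (X ω)) ⁻¹' {y} = ∅ :=
    Set.eq_empty_of_forall_notMem fun ω h => hy ⟨X ω, h⟩
  simp [hempty]

lemma condEntropy_comp_of_injective {S S' T : Type*} [Fintype S] [Fintype S'] [Fintype T]
    (X : Ω → S) (Y : Ω → T) {φ : S → S'} (hφ : Function.Injective φ) :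
    condEntropy P (fun ω => φ (X ω)) Y = condEntropy P X Y := by
  rw [condEntropy, condEntropy, entropy_comp_of_injective P X hφ,
    ← entropy_comp_of_injective P (fun ω => (X ω, Y ω)) (hφ.prodMap Function.injective_id)]
  rfl

lemma condEntropy_restrict_union {ι B T : Type*} [Fintype ι] [DecidableEq ι] [Fintype B]
    [Fintype T] (W : ι → Ω → B) (Y : Ω → T) {Q Q₁ Q₂ : ι → Prop} [DecidablePred Q]
    [DecidablePred Q₁] [DecidablePred Q₂] (h : ∀ l, Q l ↔ Q₁ l ∨ Q₂ l) :
    condEntropy P (fun ω => (fun l : {l // Q₁ l} => W l.1 ω, fun l : {l // Q₂ l} => W l.1 ω)) Y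
      = condEntropy P (fun ω (l : {l // Q l}) => W l.1 ω) Y := by
  let φ (u : {l // Q l} → B) : ({l // Q₁ l} → B) × ({l // Q₂ l} → B) :=
    (fun l => u ⟨l.1, (h l.1).2 (.inl l.2)⟩, fun l => u ⟨l.1, (h l.1).2 (.inr l.2)⟩)
  have hφ : Function.Injective φ := fun u u' huu' => funext fun l => by
    rcases (h l.1).1 l.2 with h₁ | h₂
    · exact congrFun (congrArg Prod.fst huu') ⟨l.1, h₁⟩
    · exact congrFun (congrArg Prod.snd huu') ⟨l.1, h₂⟩
  exact (condEntropy_comp_of_injective P (fun ω (l : {l // Q l}) => W l.1 ω) Y hφ :)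

variable [IsProbabilityMeasure P]

lemma sum_toReal_measure_preimage_singleton {T : Type*} [Fintype T] [MeasurableSpace T]
    [MeasurableSingletonClass T] {X : Ω → T} (hX : Measurable X) :
    ∑ x : T, (P (X ⁻¹' {x})).toReal = 1 := by
  rw [← ENNReal.toReal_sum fun _ _ => measure_ne_top P _,
    sum_measure_preimage_singleton Finset.univ fun x _ => hX (measurableSet_singleton x)]
  simp

lemma entropy_pair_eq_add_of_indepFun {S T : Type*} [Fintype S] [Fintype T]
    [MeasurableSpace S] [MeasurableSingletonClass S]
    [MeasurableSpace T] [MeasurableSingletonClass T] {X : Ω → S} {Y : Ω → T}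
    (hX : Measurable X) (hY : Measurable Y) (hXY : ProbabilityTheory.IndepFun X Y P) :
    entropy P (fun ω => (X ω, Y ω)) = entropy P X + entropy P Y := by
  have hfiber : ∀ x y, P ((fun ω => (X ω, Y ω)) ⁻¹' {(x, y)})
      = P (X ⁻¹' {x}) * P (Y ⁻¹' {y}) := fun x y => by
    rw [← hXY.measure_inter_preimage_eq_mul _ _ (measurableSet_singleton x)
      (measurableSet_singleton y)]
    congr 1; ext ω; simp
  simp only [entropy, Fintype.sum_prod_type, hfiber, ENNReal.toReal_mul, Real.negMulLog_mul,
    Finset.sum_add_distrib, ← Finset.sum_mul, ← Finset.mul_sum,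
    sum_toReal_measure_preimage_singleton P hX, sum_toReal_measure_preimage_singleton P hY, one_mul]

lemma condEntropy_add_of_indepFun {S A : Type*} [Fintype S] [Fintype A]
    [MeasurableSpace S] [MeasurableSingletonClass S]
    [MeasurableSpace A] [MeasurableSingletonClass A] [Add A] [IsLeftCancelAdd A]
    {X : Ω → S} {e : Ω → A} (hX : Measurable X) (he : Measurable e)
    (hXe : ProbabilityTheory.IndepFun X e P) (g : S → A) :
    condEntropy P X (fun ω => g (X ω) + e ω) = entropy P e := by
  have hshear : Function.Injective fun p : S × A => (p.1, g p.1 + p.2) := by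
    rintro ⟨x, a⟩ ⟨x', a'⟩ h
    simp only [Prod.mk.injEq] at h
    obtain ⟨rfl, h⟩ := h
    simp [add_left_cancel h]
  rw [condEntropy, entropy_comp_of_injective P (fun ω => (X ω, e ω)) hshear,
    entropy_pair_eq_add_of_indepFun P hX he hXe, add_sub_cancel_left]

end Entropy

section DAG

open Relation

variable {α : Type*}

def IsAncestral (E : α → α → Prop) (S : Set α) : Prop :=
  ∀ ⦃a b⦄, E a b → b ∈ S → a ∈ S

variable {E : α → α → Prop}

lemma IsAncestral.transGen {S : Set α} (hS : IsAncestral E S) {a b : α} (hab : TransGen E a b)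
    (hb : b ∈ S) : a ∈ S := by
  induction hab with
  | single h => exact hS h hb
  | tail _ h ih => exact ih (hS h hb)

lemma ne_of_transGen (hE : ∀ a, ¬ TransGen E a a) {a b : α} (h : TransGen E a b) : a ≠ b :=
  fun hab => hE a (hab ▸ h)

lemma wellFounded_transGen_of_acyclic [Finite α] (hE : ∀ a, ¬ TransGen E a a) :
    WellFounded (TransGen E) := by
  have : IsTrans α (TransGen E) := ⟨fun _ _ _ => TransGen.trans⟩
  have : Std.Irrefl (TransGen E) := ⟨hE⟩
  exact Finite.wellFounded_of_trans_of_irrefl _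

lemma exists_sink_mem [Finite α] (hE : ∀ a, ¬ TransGen E a a) {S : Set α} (hS : S.Nonempty) :
    ∃ i ∈ S, ∀ l ∈ S, ¬ TransGen E i l := by
  have hE' : ∀ a, ¬ TransGen (Function.swap E) a a := fun a h => hE a (transGen_swap.1 h)
  obtain ⟨i, hi, hmin⟩ := (wellFounded_transGen_of_acyclic hE').has_min S hS
  exact ⟨i, hi, fun l hl h => hmin l hl (transGen_swap.2 h)⟩

lemma exists_equiv_fin_strictMono {β : Type*} [Fintype β] (s : β → β → Prop) [IsStrictOrder β s]
    {n : ℕ} (hn : Fintype.card β = n) : ∃ e : β ≃ Fin n, ∀ a b, s a b → e a < e b := by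
  let _ : PartialOrder β := partialOrderOfSO s
  let _ : Fintype (LinearExtension β) := ‹Fintype β›
  let e := (Fintype.orderIsoFinOfCardEq (LinearExtension β) hn).symm
  refine ⟨e.toEquiv, fun a b hab => e.strictMono ?_⟩
  refine (toLinearExtension.monotone (Or.inr hab)).lt_of_ne fun h => ?_
  obtain rfl : a = b := h
  exact irrefl_of s a hab

lemma Fin.perm_le_iff_of_forall_lt {n : ℕ} (g : Equiv.Perm (Fin n)) (m : Fin n)
    (h : ∀ a b, a ≤ m → m < b → g a < g b) (a : Fin n) : g a ≤ m ↔ a ≤ m := by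
  have hmaps : ∀ a ≤ m, g a ≤ m := by
    intro a ha
    by_contra! hlt
    have hcard := Finset.card_le_card_of_injOn g (s := insert a (Finset.Ioi m))
      (t := Finset.Ioi m) (fun b hb => ?_) g.injective.injOn
    · rw [Finset.card_insert_of_notMem (by simpa using ha)] at hcard
      omega
    · obtain rfl | hb := Finset.mem_insert.1 hb
      · simpa using hlt
      · exact Finset.mem_Ioi.2 (hlt.trans (h a b ha (Finset.mem_Ioi.1 hb)))
  refine ⟨fun hga => ?_, hmaps a⟩
  have himage : (Finset.Iic m).map g.toEmbedding = Finset.Iic m :=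
    Finset.eq_of_subset_of_card_le (fun b hb => by
      obtain ⟨c, hc, rfl⟩ := Finset.mem_map.1 hb
      exact Finset.mem_Iic.2 (hmaps c (Finset.mem_Iic.1 hc))) (by simp)
  obtain ⟨c, hc, hca⟩ := Finset.mem_map.1 (himage ▸ Finset.mem_Iic.2 hga)
  exact g.injective hca ▸ Finset.mem_Iic.1 hc

end DAG

section TopologicalOrder

open Relation

variable {d : ℕ} {E : Fin d → Fin d → Prop}

lemma exists_topologicalOrder_prefix_eq (hE : ∀ a, ¬ TransGen E a a) (π : Equiv.Perm (Fin d))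
    (m : Fin d) (hπ : IsAncestral E {l | π.symm l ≤ m}) :
    ∃ σ : Equiv.Perm (Fin d), (∀ a b, TransGen E a b → σ.symm a < σ.symm b) ∧
      ∀ l, σ.symm l ≤ m ↔ π.symm l ≤ m := by
  let s a b := TransGen E a b ∨ (π.symm a ≤ m ∧ m < π.symm b)
  have : IsStrictOrder (Fin d) s :=
    { irrefl a := by rintro (h | ⟨h₁, h₂⟩) <;> [exact hE a h; exact h₂.not_ge h₁]
      trans a b c := by
        rintro (hab | ⟨ha, hb⟩) (hbc | ⟨hb', hc⟩)
        · exact .inl (hab.trans hbc)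
        · exact .inr ⟨hπ.transGen hab hb', hc⟩
        · exact .inr ⟨ha, not_le.1 fun hc => hb.not_ge (hπ.transGen hbc hc)⟩
        · exact absurd hb' hb.not_ge }
  obtain ⟨e, he⟩ := exists_equiv_fin_strictMono s (Fintype.card_fin d)
  refine ⟨e.symm, fun a b h => he a b (.inl h), fun l => ?_⟩
  simpa using Fin.perm_le_iff_of_forall_lt (π.trans e) m
    (fun a b ha hb => he (π a) (π b) (.inr (by simpa using And.intro ha hb))) (π.symm l)

lemma lt_of_transGen_of_forall_prefix_sink (π : Equiv.Perm (Fin d))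
    (hsink : ∀ m, IsAncestral E {l | π.symm l ≤ m} → ∀ l, π.symm l ≤ m → ¬ E (π m) l)
    {a b : Fin d} (hab : TransGen E a b) : π.symm a < π.symm b := by
  obtain _ | n := d
  · exact a.elim0
  have hanc : ∀ m, IsAncestral E {l | π.symm l ≤ m} := by
    intro m
    induction m using Fin.reverseInduction with
    | last => exact fun a _ _ _ => Fin.le_last _
    | cast i ih =>
      intro a b hab hb
      have hb' : π.symm b ≤ i.succ := (Fin.le_castSucc_iff.1 hb).le
      refine Fin.le_castSucc_iff.2 (lt_of_le_of_ne (ih hab hb') fun ha => ?_)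
      exact hsink i.succ ih b hb' (by rwa [← ha, Equiv.apply_symm_apply])
  have hedge : ∀ a b, E a b → π.symm a < π.symm b := fun a b hab => by
    by_contra! hba
    exact hsink _ (hanc _) b hba (by rwa [Equiv.apply_symm_apply])
  induction hab with
  | single h => exact hedge _ _ h
  | tail _ h ih => exact ih.trans (hedge _ _ h)

end TopologicalOrder

section StructuralEquations

open Relation ProbabilityTheory

variable {ι Ω A : Type*} {E : ι → ι → Prop} [Add A]
  {f : (i : ι) → ({j : ι // E j i} → A) → A} {ε V : ι → Ω → A}

lemma exists_solution_eq_comp_noise (hE : WellFounded E)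
    (hV : ∀ i ω, V i ω = f i (fun j => V j.1 ω) + ε i ω) (l : ι) :
    ∃ F : ({k // ReflTransGen E k l} → A) → A, ∀ ω, V l ω = F fun k => ε k.1 ω := by
  induction l using hE.induction with
  | _ l ih =>
    choose F hF using ih
    refine ⟨fun u => f l (fun p => F p.1 p.2 fun k => u ⟨k.1, k.2.tail p.2⟩)
      + u ⟨l, .refl⟩, fun ω => ?_⟩
    rw [hV]
    simp only [← hF]

variable [MeasurableSpace Ω] {P : Measure Ω} [Fintype ι] [Fintype A] [MeasurableSpace A]
  [MeasurableSingletonClass A]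

lemma indepFun_solution_noise (hE : WellFounded E) (hεmeas : ∀ i, Measurable (ε i))
    (hindep : iIndepFun ε P) (hV : ∀ i ω, V i ω = f i (fun j => V j.1 ω) + ε i ω)
    {Q : ι → Prop} {j : ι} (hQ : ∀ l, Q l → ¬ ReflTransGen E j l) :
    IndepFun (fun ω (l : {l // Q l}) => V l.1 ω) (ε j) P := by
  choose F hF using exists_solution_eq_comp_noise hE hV
  have hne : ∀ l : {l // Q l}, ∀ k : {k // ReflTransGen E k l.1}, k.1 ∈ Finset.univ.erase j :=
    fun l k => Finset.mem_erase.2 ⟨fun h => hQ l.1 l.2 (h ▸ k.2), Finset.mem_univ _⟩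
  have hsplit := hindep.indepFun_finset (Finset.univ.erase j) {j} (by simp) hεmeas
  refine (hsplit.comp (φ := fun u l => F l.1 fun k => u ⟨k.1, hne l k⟩)
    (ψ := fun v => v ⟨j, Finset.mem_singleton_self j⟩) (measurable_of_countable _)
    (measurable_of_countable _)).congr ?_ .rfl
  exact .of_forall fun ω => funext fun l => (hF l.1 ω).symm

lemma condEntropy_solution_eq_entropy_noise [IsProbabilityMeasure P] [IsLeftCancelAdd A]
    (hE : WellFounded E) (hεmeas : ∀ i, Measurable (ε i)) (hindep : iIndepFun ε P)
    (hVmeas : ∀ i, Measurable (V i)) (hV : ∀ i ω, V i ω = f i (fun j => V j.1 ω) + ε i ω)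
    [DecidableEq ι] {Q : ι → Prop} [DecidablePred Q] {j : ι} (hpa : ∀ p, E p j → Q p)
    (hQ : ∀ l, Q l → ¬ ReflTransGen E j l) :
    condEntropy P (fun ω (l : {l // Q l}) => V l.1 ω) (V j) = entropy P (ε j) := by
  let X := fun ω (l : {l // Q l}) => V l.1 ω
  let g := fun u : {l // Q l} → A => f j fun p => u ⟨p.1, hpa p.1 p.2⟩
  have hVj : V j = fun ω => g (X ω) + ε j ω := funext (hV j)
  rw [hVj]
  have hX : Measurable X := measurable_pi_lambda _ fun l => hVmeas l.1
  exact condEntropy_add_of_indepFun P hX (hεmeas j)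
    (indepFun_solution_noise hE hεmeas hindep hV hQ) g

lemma condMutualInfo_descendants_eq [IsProbabilityMeasure P] [IsLeftCancelAdd A] [DecidableEq ι]
    (hE : ∀ a, ¬ TransGen E a a) (hεmeas : ∀ i, Measurable (ε i)) (hindep : iIndepFun ε P)
    (hVmeas : ∀ i, Measurable (V i)) (hV : ∀ i ω, V i ω = f i (fun j => V j.1 ω) + ε i ω)
    {S S' : ι → Prop} [DecidablePred S] [DecidablePred S'] (hSS' : ∀ l, S l ↔ S' l) {j : ι}
    (hpa : ∀ p, E p j → S p) :
    condMutualInfo P (fun ω (l : {l // (S l ∧ l ≠ j) ∧ ¬ TransGen E j l}) => V l.1 ω) (V j)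
        (fun ω (l : {l // S l ∧ TransGen E j l}) => V l.1 ω)
      = entropy P (ε j) - condEntropy P (fun ω (l : {l // S' l ∧ l ≠ j}) => V l.1 ω) (V j) := by
  have hwf : WellFounded E := (wellFounded_transGen_of_acyclic hE).mono fun _ _ => .single
  have hunion : ∀ l, S' l ∧ l ≠ j ↔ ((S l ∧ l ≠ j) ∧ ¬ TransGen E j l) ∨ (S l ∧ TransGen E j l) :=
    fun l => by
      rw [← hSS' l]
      by_cases h : TransGen E j l
      · simp [h, (ne_of_transGen hE h).symm]
      · simp [h]
  rw [condMutualInfo, condEntropy_solution_eq_entropy_noise hwf hεmeas hindep hVmeas hV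
      (fun p hp => ⟨⟨hpa p hp, ne_of_transGen hE (.single hp)⟩, fun h => hE _ (h.tail hp)⟩)
      (fun l hl h => (reflTransGen_iff_eq_or_transGen.1 h).elim hl.1.2 hl.2),
    condEntropy_restrict_union P V (V j) hunion]

end StructuralEquations

/-- Discrete analogue of Theorem 3.1 (soundness of OLEM): under the OLEM
assumption, any permutation `π` such that, for every `m`, the node `π(m)`
maximizes the conditional entropy given the other variables of the prefix
`π[1:m]` over that prefix, is a topological order of `G`. -/
theorem stmt12 {d : ℕ} (E : Fin d → Fin d → Prop)
    (hacyc : ∀ i, ¬ Relation.TransGen E i i)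
    {Ω A : Type*} [MeasurableSpace Ω] (P : Measure Ω) [IsProbabilityMeasure P]
    [Fintype A] [AddCommGroup A] [MeasurableSpace A] [MeasurableSingletonClass A]
    (ε : Fin d → Ω → A) (hεmeas : ∀ i, Measurable (ε i))
    (hindep : ProbabilityTheory.iIndepFun ε P)
    (f : (i : Fin d) → ({j : Fin d // E j i} → A) → A)
    (V : Fin d → Ω → A) (hVmeas : ∀ i, Measurable (V i))
    (hV : ∀ i ω, V i ω = f i (fun j => V j.1 ω) + ε i ω)
    (hyp : ∀ σ : Equiv.Perm (Fin d),
      (∀ a b, Relation.TransGen E a b → σ.symm a < σ.symm b) →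
      ∀ m : Fin d, ∀ i j : Fin d, σ.symm i ≤ m → σ.symm j ≤ m →
        (∀ l, σ.symm l ≤ m → ¬ E i l) →
        (∃ l, σ.symm l ≤ m ∧ E j l) →
        entropy P (ε j) - entropy P (ε i)
          < condMutualInfo P
              (fun ω =>
                fun l : {l : Fin d // (σ.symm l ≤ m ∧ l ≠ j) ∧ ¬ Relation.TransGen E j l} =>
                  V l.1 ω)
              (V j)
              (fun ω => fun l : {l : Fin d // σ.symm l ≤ m ∧ Relation.TransGen E j l} =>
                V l.1 ω))
    (π : Equiv.Perm (Fin d))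
    (hmax : ∀ m : Fin d, ∀ i : Fin d, π.symm i ≤ m →
      condEntropy P (fun ω => fun l : {l : Fin d // π.symm l ≤ m ∧ l ≠ i} => V l.1 ω) (V i)
        ≤ condEntropy P
            (fun ω => fun l : {l : Fin d // π.symm l ≤ m ∧ l ≠ π m} => V l.1 ω) (V (π m))) :
    ∀ a b, Relation.TransGen E a b → π.symm a < π.symm b := by
  have hwf : WellFounded E := (wellFounded_transGen_of_acyclic hacyc).mono fun _ _ => .single
  refine fun a b => lt_of_transGen_of_forall_prefix_sink π fun m hanc l hlm hjl => ?_
  have hjm : π.symm (π m) ≤ m := by simp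
  obtain ⟨i, him, hi⟩ := exists_sink_mem hacyc (S := {l | π.symm l ≤ m}) ⟨π m, hjm⟩
  obtain ⟨σ, hσ, hσm⟩ := exists_topologicalOrder_prefix_eq hacyc π m hanc
  have hOLEM := hyp σ hσ m i (π m) ((hσm i).2 him) ((hσm _).2 hjm)
    (fun l hl hil => hi l ((hσm l).1 hl) (.single hil)) ⟨l, (hσm l).2 hlm, hjl⟩
  have hHi : condEntropy P (fun ω (l : {l // π.symm l ≤ m ∧ l ≠ i}) => V l.1 ω) (V i)
      = entropy P (ε i) :=
    condEntropy_solution_eq_entropy_noise hwf hεmeas hindep hVmeas hV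
      (fun p hp => ⟨hanc hp him, ne_of_transGen hacyc (.single hp)⟩)
      (fun l hl h => (Relation.reflTransGen_iff_eq_or_transGen.1 h).elim hl.2 (hi l hl.1))
  rw [condMutualInfo_descendants_eq hacyc hεmeas hindep hVmeas hV hσm
    (fun p hp => (hσm p).2 (hanc hp hjm))] at hOLEM
  linarith [hmax m i him]
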